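/- For the DDPM forward process (λₙ² = β̃ₙ := (β̄_{n−1}/β̄ₙ) βₙ), the optimal reverse variance satisfies β̃ₙ ≤ σₙ*² ≤ βₙ/αₙ; if furthermore the data distribution q(x₀) is supported in [a, b]^d, then also σₙ*² ≤ β̃ₙ + (ᾱ_{n−1} βₙ²/β̄ₙ²) ((b − a)/2)². -/

import Mathlib

/-!
The covariance term of `σₙ*²` is nonnegative, which gives the lower bound. For the upper bounds,
the conditional mean minimises the mean squared deviation, so for every `xₙ` the conditional
trace-covariance is dominated by `∫ q(x₀, xₙ) ‖x₀ - c(xₙ)‖² dx₀` for any `c`. With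
`c(xₙ) = xₙ / √ᾱₙ`, integrating out `xₙ` first leaves the Gaussian second moment
`∫ ‖x₀ - xₙ / √ᾱₙ‖² q(xₙ | x₀) dxₙ = d β̄ₙ / ᾱₙ`, and `β̄ₙ = αₙ β̄ₙ₋₁ + βₙ` turns the
resulting bound into `βₙ / αₙ`. For data in `[a, b]^d`, the centre of the cube as `c` gives
`‖x₀ - c‖² ≤ d ((b - a) / 2)²`.
-/

open MeasureTheory Finset

/-- Isotropic Gaussian density `N(μ, s·I)` on `ℝ^d`. -/
noncomputable def gaussIso (d : ℕ) (μ : Fin d → ℝ) (s : ℝ) (x : Fin d → ℝ) : ℝ :=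
  (2 * Real.pi * s) ^ (-(d : ℝ) / 2) * Real.exp (-(∑ i, (x i - μ i) ^ 2) / (2 * s))

/-- `ᾱₙ = ∏_{i=1}^n (1 − βᵢ)`. -/
noncomputable def alphaBar (β : ℕ → ℝ) (n : ℕ) : ℝ := ∏ i ∈ Finset.Icc 1 n, (1 - β i)

/-- `β̄ₙ = 1 − ᾱₙ`. -/
noncomputable def betaBar (β : ℕ → ℝ) (n : ℕ) : ℝ := 1 - alphaBar β n

/-- `β̃ₙ = (β̄_{n−1}/β̄ₙ) βₙ`. -/
noncomputable def betaTilde (β : ℕ → ℝ) (n : ℕ) : ℝ :=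
  betaBar β (n - 1) / betaBar β n * β n

/-- Joint density of `(x₀, xₙ)`, using the DDPM marginal `q(xₙ|x₀) = N(√ᾱₙ x₀, β̄ₙ I)`. -/
noncomputable def joint0n (d : ℕ) (β : ℕ → ℝ) (q0 : (Fin d → ℝ) → ℝ) (n : ℕ)
    (x0 xn : Fin d → ℝ) : ℝ :=
  q0 x0 * gaussIso d (fun i => Real.sqrt (alphaBar β n) * x0 i) (betaBar β n) xn

/-- Marginal density `qₙ(xₙ)`. -/
noncomputable def margN (d : ℕ) (β : ℕ → ℝ) (q0 : (Fin d → ℝ) → ℝ) (n : ℕ)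
    (xn : Fin d → ℝ) : ℝ :=
  ∫ x0, joint0n d β q0 n x0 xn

/-- Conditional mean `E_{q(x₀|xₙ)}[x₀]`. -/
noncomputable def condMean0 (d : ℕ) (β : ℕ → ℝ) (q0 : (Fin d → ℝ) → ℝ) (n : ℕ)
    (xn : Fin d → ℝ) : Fin d → ℝ :=
  fun i => (∫ x0, joint0n d β q0 n x0 xn * x0 i) / margN d β q0 n xn

/-- `E_{qₙ(xₙ)}[tr(Cov_{q(x₀|xₙ)}[x₀])]`. -/
noncomputable def EtrCov (d : ℕ) (β : ℕ → ℝ) (q0 : (Fin d → ℝ) → ℝ) (n : ℕ) : ℝ :=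
  ∫ xn, ∫ x0, joint0n d β q0 n x0 xn * ∑ i, (x0 i - condMean0 d β q0 n xn i) ^ 2

/-- The DDPM optimal reverse variance
`σₙ*² = β̃ₙ + (ᾱ_{n−1} βₙ²/β̄ₙ²) E_{qₙ}[tr Cov_{q(x₀|xₙ)}[x₀]/d]`. -/
noncomputable def sigmaStarDDPM2 (d : ℕ) (β : ℕ → ℝ) (q0 : (Fin d → ℝ) → ℝ) (n : ℕ) : ℝ :=
  betaTilde β n + alphaBar β (n - 1) * β n ^ 2 / betaBar β n ^ 2 * (EtrCov d β q0 n / d)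

open ProbabilityTheory
open scoped NNReal

lemma integral_gaussianPDFReal_mul_sq_sub (μ : ℝ) {v : ℝ≥0} (hv : v ≠ 0) :
    ∫ x, gaussianPDFReal μ v x * (x - μ) ^ 2 = v := by
  have h := variance_fun_id_gaussianReal (μ := μ) (v := v)
  rwa [variance_eq_integral measurable_id'.aemeasurable, integral_id_gaussianReal,
    integral_gaussianReal_eq_integral_smul hv] at h

lemma integrable_gaussianPDFReal_mul_sq_sub (μ : ℝ) {v : ℝ≥0} (hv : v ≠ 0) :
    Integrable (fun x => gaussianPDFReal μ v x * (x - μ) ^ 2) :=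
  Integrable.of_integral_ne_zero <| by
    rw [integral_gaussianPDFReal_mul_sq_sub μ hv]; exact_mod_cast hv

section gaussIso

variable {d : ℕ} {s : ℝ}

lemma gaussIso_eq_prod (hs : 0 < s) (μ x : Fin d → ℝ) :
    gaussIso d μ s x = ∏ i, gaussianPDFReal (μ i) s.toNNReal (x i) := by
  have h2πs : 0 < 2 * Real.pi * s := by positivity
  simp only [gaussIso, gaussianPDFReal, Real.coe_toNNReal _ hs.le, Finset.prod_mul_distrib,
    ← Real.exp_sum, Finset.prod_const, Finset.card_univ, Fintype.card_fin]
  congr 1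
  · rw [Real.sqrt_eq_rpow, ← Real.rpow_neg_one, ← Real.rpow_mul h2πs.le,
      ← Real.rpow_natCast, ← Real.rpow_mul h2πs.le]
    ring_nf
  · rw [← Finset.sum_div, ← Finset.sum_neg_distrib]

lemma integral_gaussIso_mul_prod (hs : 0 < s) (μ : Fin d → ℝ) (f : Fin d → ℝ → ℝ) :
    ∫ x, gaussIso d μ s x * ∏ i, f i (x i)
      = ∏ i, ∫ t, gaussianPDFReal (μ i) s.toNNReal t * f i t := by
  simp_rw [gaussIso_eq_prod hs, ← Finset.prod_mul_distrib]
  exact integral_fintype_prod_volume_eq_prod (fun i t => gaussianPDFReal (μ i) s.toNNReal t * f i t)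

lemma integrable_gaussIso_mul_prod (hs : 0 < s) (μ : Fin d → ℝ) {f : Fin d → ℝ → ℝ}
    (hf : ∀ i, Integrable (fun t => gaussianPDFReal (μ i) s.toNNReal t * f i t)) :
    Integrable (fun x => gaussIso d μ s x * ∏ i, f i (x i)) := by
  simp_rw [gaussIso_eq_prod hs, ← Finset.prod_mul_distrib]
  exact Integrable.fintype_prod hf

lemma integral_gaussIso (hs : 0 < s) (μ : Fin d → ℝ) : ∫ x, gaussIso d μ s x = 1 := by
  simpa [integral_gaussianPDFReal_eq_one _ (Real.toNNReal_pos.mpr hs).ne']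
    using integral_gaussIso_mul_prod hs μ (fun _ _ => 1)

lemma integrable_gaussIso (hs : 0 < s) (μ : Fin d → ℝ) : Integrable (gaussIso d μ s) := by
  simpa using integrable_gaussIso_mul_prod hs μ (f := fun _ _ => 1)
    (fun i => by simpa using integrable_gaussianPDFReal (μ i) s.toNNReal)

lemma sq_sub_eq_prod (μ x : Fin d → ℝ) (i : Fin d) :
    (x i - μ i) ^ 2 = ∏ j, (if j = i then (x j - μ j) ^ 2 else 1) :=
  (Fintype.prod_ite_eq' i fun j => (x j - μ j) ^ 2).symm

lemma integral_gaussIso_mul_sq_sub (hs : 0 < s) (μ : Fin d → ℝ) (i : Fin d) :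
    ∫ x, gaussIso d μ s x * (x i - μ i) ^ 2 = s := by
  have hv : s.toNNReal ≠ 0 := (Real.toNNReal_pos.mpr hs).ne'
  simp_rw [sq_sub_eq_prod μ _ i]
  rw [integral_gaussIso_mul_prod hs μ (fun j t => if j = i then (t - μ j) ^ 2 else 1)]
  have hfac : ∀ j, ∫ t, gaussianPDFReal (μ j) s.toNNReal t * (if j = i then (t - μ j) ^ 2 else 1)
      = if j = i then s else 1 := by
    intro j
    split_ifs
    · rw [integral_gaussianPDFReal_mul_sq_sub _ hv, Real.coe_toNNReal _ hs.le]
    · simpa using integral_gaussianPDFReal_eq_one (μ j) hv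
  simp_rw [hfac, Fintype.prod_ite_eq']

lemma integrable_gaussIso_mul_sq_sub (hs : 0 < s) (μ : Fin d → ℝ) (i : Fin d) :
    Integrable (fun x => gaussIso d μ s x * (x i - μ i) ^ 2) := by
  have hv : s.toNNReal ≠ 0 := (Real.toNNReal_pos.mpr hs).ne'
  simp_rw [sq_sub_eq_prod μ _ i]
  refine integrable_gaussIso_mul_prod hs μ (f := fun j t => if j = i then (t - μ j) ^ 2 else 1)
    fun j => ?_
  split_ifs
  · exact integrable_gaussianPDFReal_mul_sq_sub _ hv
  · simpa using integrable_gaussianPDFReal (μ j) s.toNNReal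

lemma integrable_gaussIso_mul_sum_sq_sub (hs : 0 < s) (μ : Fin d → ℝ) :
    Integrable (fun x => gaussIso d μ s x * ∑ i, (x i - μ i) ^ 2) := by
  simp_rw [Finset.mul_sum]
  exact integrable_finsetSum _ fun i _ => integrable_gaussIso_mul_sq_sub hs μ i

lemma integral_gaussIso_mul_sum_sq_sub (hs : 0 < s) (μ : Fin d → ℝ) :
    ∫ x, gaussIso d μ s x * ∑ i, (x i - μ i) ^ 2 = d * s := by
  simp_rw [Finset.mul_sum]
  rw [integral_finsetSum _ fun i _ => integrable_gaussIso_mul_sq_sub hs μ i]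
  simp [integral_gaussIso_mul_sq_sub hs]

end gaussIso

section WeightedMean

variable {α : Type*} [MeasurableSpace α] {μ : Measure α} {f g : α → ℝ}

lemma integrable_mul_sq_sub (hf : Integrable f μ) (hfg : Integrable (fun a => f a * g a) μ)
    (hfg2 : Integrable (fun a => f a * g a ^ 2) μ) (c : ℝ) :
    Integrable (fun a => f a * (g a - c) ^ 2) μ :=
  ((hfg2.sub (hfg.const_mul (2 * c))).add (hf.const_mul (c ^ 2))).congr
    (ae_of_all _ fun a => by simp only [Pi.add_apply, Pi.sub_apply]; ring)

lemma integral_mul_sq_sub (hf : Integrable f μ) (hfg : Integrable (fun a => f a * g a) μ)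
    (hfg2 : Integrable (fun a => f a * g a ^ 2) μ) (c : ℝ) :
    ∫ a, f a * (g a - c) ^ 2 ∂μ
      = ∫ a, f a * g a ^ 2 ∂μ - 2 * c * ∫ a, f a * g a ∂μ + c ^ 2 * ∫ a, f a ∂μ := by
  have hexp : (fun a => f a * (g a - c) ^ 2)
      = fun a => f a * g a ^ 2 - 2 * c * (f a * g a) + c ^ 2 * f a := by
    funext a; ring
  rw [hexp, integral_add (f := fun a => f a * g a ^ 2 - 2 * c * (f a * g a))
      (hfg2.sub (hfg.const_mul _)) (hf.const_mul _),
    integral_sub hfg2 (hfg.const_mul _), integral_const_mul, integral_const_mul]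

lemma integrable_mul_of_integrable_mul_sq (hf0 : 0 ≤ f) (hf : Integrable f μ)
    (hg : AEStronglyMeasurable g μ) (hfg2 : Integrable (fun a => f a * g a ^ 2) μ) :
    Integrable (fun a => f a * g a) μ := by
  refine (hf.add hfg2).mono' (hf.aestronglyMeasurable.mul hg) (ae_of_all _ fun a => ?_)
  have hg_le : |g a| ≤ 1 + g a ^ 2 := by nlinarith [sq_nonneg (|g a| - 1), sq_abs (g a)]
  rw [norm_mul, Real.norm_of_nonneg (hf0 a), Real.norm_eq_abs, Pi.add_apply]
  nlinarith [mul_le_mul_of_nonneg_left hg_le (hf0 a)]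

/-- The weight need not be normalised; if its mass is `0`, then `f = 0` a.e. and both sides
vanish. -/
lemma integral_mul_sq_sub_mean_le (hf0 : 0 ≤ f) (hf : Integrable f μ)
    (hfg : Integrable (fun a => f a * g a) μ) (hfg2 : Integrable (fun a => f a * g a ^ 2) μ)
    (c : ℝ) :
    ∫ a, f a * (g a - (∫ a, f a * g a ∂μ) / ∫ a, f a ∂μ) ^ 2 ∂μ
      ≤ ∫ a, f a * (g a - c) ^ 2 ∂μ := by
  have hM0 : 0 ≤ ∫ a, f a ∂μ := integral_nonneg hf0
  rw [integral_mul_sq_sub hf hfg hfg2, integral_mul_sq_sub hf hfg hfg2]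
  set M := ∫ a, f a ∂μ
  set S := ∫ a, f a * g a ∂μ
  rcases hM0.eq_or_lt with hM | hM
  · have hS : S = 0 := integral_eq_zero_of_ae <| by
      filter_upwards [(integral_eq_zero_iff_of_nonneg hf0 hf).mp hM.symm] with a ha
      simp [ha]
    simp [hS, ← hM]
  · have key : 0 ≤ (c * M - S) ^ 2 / M := by positivity
    have : (c * M - S) ^ 2 / M = c ^ 2 * M - 2 * c * S + S ^ 2 / M := by field_simp; ring
    have : 2 * (S / M) * S - (S / M) ^ 2 * M = S ^ 2 / M := by field_simp; ring
    linarith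

end WeightedMean

lemma integral_le_integral_integral_swap {α β : Type*} [MeasurableSpace α] [MeasurableSpace β]
    {μ : Measure α} {ν : Measure β} [SFinite μ] [SFinite ν] {I : β → ℝ} {F : α → β → ℝ}
    (hI : 0 ≤ I) (hIF : ∀ y, I y ≤ ∫ x, F x y ∂μ) (hF : ∀ x y, 0 ≤ F x y)
    (hFm : AEStronglyMeasurable (Function.uncurry F) (μ.prod ν))
    (hFy : ∀ x, Integrable (F x) ν) (hFx : Integrable (fun x => ∫ y, F x y ∂ν) μ) :
    ∫ y, I y ∂ν ≤ ∫ x, ∫ y, F x y ∂ν ∂μ := by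
  have hFint : Integrable (Function.uncurry F) (μ.prod ν) := by
    refine (integrable_prod_iff hFm).mpr ⟨ae_of_all _ hFy, hFx.congr (ae_of_all _ fun x => ?_)⟩
    simp only [Function.uncurry_apply_pair, Real.norm_of_nonneg (hF _ _)]
  rw [integral_integral_swap hFint]
  exact integral_mono_of_nonneg (ae_of_all _ hI) hFint.integral_prod_right (ae_of_all _ hIF)

section Joint

variable {d : ℕ} {β : ℕ → ℝ} {q0 : (Fin d → ℝ) → ℝ} {n : ℕ}

lemma gaussIso_nonneg {s : ℝ} (hs : 0 ≤ s) (μ x : Fin d → ℝ) : 0 ≤ gaussIso d μ s x := by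
  unfold gaussIso; positivity

lemma gaussIso_le {s : ℝ} (hs : 0 ≤ s) (μ x : Fin d → ℝ) :
    gaussIso d μ s x ≤ (2 * Real.pi * s) ^ (-(d : ℝ) / 2) := by
  unfold gaussIso
  refine mul_le_of_le_one_right (by positivity) (Real.exp_le_one_iff.mpr ?_)
  exact div_nonpos_of_nonpos_of_nonneg (neg_nonpos.mpr (by positivity)) (by positivity)

lemma joint0n_nonneg (hq0 : ∀ v, 0 ≤ q0 v) (hB : 0 ≤ betaBar β n) (x0 xn : Fin d → ℝ) :
    0 ≤ joint0n d β q0 n x0 xn :=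
  mul_nonneg (hq0 x0) (gaussIso_nonneg hB _ _)

lemma joint0n_mul_sum_sq_sub_nonneg (hq0 : ∀ v, 0 ≤ q0 v) (hB : 0 ≤ betaBar β n)
    (x0 xn c : Fin d → ℝ) : 0 ≤ joint0n d β q0 n x0 xn * ∑ i, (x0 i - c i) ^ 2 :=
  mul_nonneg (joint0n_nonneg hq0 hB x0 xn) (Finset.sum_nonneg fun _ _ => sq_nonneg _)

lemma measurable_joint0n (hq0 : Measurable q0) :
    Measurable (Function.uncurry (joint0n d β q0 n)) := by
  unfold Function.uncurry joint0n gaussIso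
  fun_prop

lemma integrable_joint0n_mul (hB : 0 ≤ betaBar β n) {w : (Fin d → ℝ) → ℝ}
    (hw : Integrable (fun v => q0 v * w v)) (xn : Fin d → ℝ) :
    Integrable (fun x0 => joint0n d β q0 n x0 xn * w x0) := by
  have hgauss : Measurable fun x0 : Fin d → ℝ =>
      gaussIso d (fun i => Real.sqrt (alphaBar β n) * x0 i) (betaBar β n) xn := by
    unfold gaussIso; fun_prop
  refine (hw.bdd_mul hgauss.aestronglyMeasurable (c := (2 * Real.pi * betaBar β n) ^ (-(d : ℝ) / 2))
    (ae_of_all _ fun x0 => ?_)).congr (ae_of_all _ fun x0 => ?_)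
  · rw [Real.norm_of_nonneg (gaussIso_nonneg hB _ _)]
    exact gaussIso_le hB _ _
  · simp only [joint0n]; ring

end Joint

section Moments

variable {d : ℕ} {β : ℕ → ℝ} {q0 : (Fin d → ℝ) → ℝ} {n : ℕ}

lemma integrable_mul_apply_sq {ι : Type*} [Fintype ι] {μ : Measure (ι → ℝ)} {f : (ι → ℝ) → ℝ}
    (hf0 : 0 ≤ f) (hf : Measurable f) (h : Integrable (fun v => f v * ∑ i, v i ^ 2) μ) (i : ι) :
    Integrable (fun v => f v * v i ^ 2) μ := by
  refine h.mono' (by fun_prop) (ae_of_all _ fun v => ?_)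
  rw [norm_mul, Real.norm_of_nonneg (hf0 v), Real.norm_of_nonneg (sq_nonneg _)]
  exact mul_le_mul_of_nonneg_left
    (Finset.single_le_sum (fun j _ => sq_nonneg (v j)) (Finset.mem_univ i)) (hf0 v)

lemma integral_joint0n_mul_sum_sq_sub_condMean0_le (hq0_nonneg : ∀ v, 0 ≤ q0 v)
    (hq0_meas : Measurable q0) (hq0_int : Integrable q0)
    (hq0_mom2 : Integrable (fun v => q0 v * ∑ i, (v i) ^ 2)) (hB : 0 ≤ betaBar β n)
    (xn c : Fin d → ℝ) :
    ∫ x0, joint0n d β q0 n x0 xn * ∑ i, (x0 i - condMean0 d β q0 n xn i) ^ 2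
      ≤ ∫ x0, joint0n d β q0 n x0 xn * ∑ i, (x0 i - c i) ^ 2 := by
  have hJ0 : 0 ≤ fun x0 => joint0n d β q0 n x0 xn := fun x0 => joint0n_nonneg hq0_nonneg hB x0 xn
  have hJ : Integrable fun x0 => joint0n d β q0 n x0 xn := by
    simpa using integrable_joint0n_mul hB (w := fun _ => 1) (by simpa using hq0_int) xn
  have hJx2 (i : Fin d) : Integrable fun x0 => joint0n d β q0 n x0 xn * x0 i ^ 2 :=
    integrable_joint0n_mul hB
      (integrable_mul_apply_sq (fun v => hq0_nonneg v) hq0_meas hq0_mom2 i) xn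
  have hJx (i : Fin d) : Integrable fun x0 => joint0n d β q0 n x0 xn * x0 i :=
    integrable_mul_of_integrable_mul_sq hJ0 hJ (measurable_pi_apply i).aestronglyMeasurable (hJx2 i)
  simp_rw [Finset.mul_sum]
  rw [integral_finsetSum _ fun i _ => integrable_mul_sq_sub hJ (hJx i) (hJx2 i) _,
    integral_finsetSum _ fun i _ => integrable_mul_sq_sub hJ (hJx i) (hJx2 i) _]
  exact Finset.sum_le_sum fun i _ => integral_mul_sq_sub_mean_le hJ0 hJ (hJx i) (hJx2 i) (c i)

end Moments

section EtrCov

variable {d : ℕ} {β : ℕ → ℝ} {q0 : (Fin d → ℝ) → ℝ} {n : ℕ}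

lemma EtrCov_nonneg (hq0 : ∀ v, 0 ≤ q0 v) (hB : 0 ≤ betaBar β n) : 0 ≤ EtrCov d β q0 n :=
  integral_nonneg fun xn => integral_nonneg fun x0 => joint0n_mul_sum_sq_sub_nonneg hq0 hB x0 xn _

lemma EtrCov_le_of_le_integral (hq0_nonneg : ∀ v, 0 ≤ q0 v) (hq0_int : Integrable q0)
    (hq0_one : ∫ v, q0 v = 1) (hB : 0 ≤ betaBar β n) {F : (Fin d → ℝ) → (Fin d → ℝ) → ℝ}
    {K : ℝ} (hF : ∀ x0 xn, 0 ≤ F x0 xn) (hFm : Measurable (Function.uncurry F))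
    (hFint : ∀ x0, Integrable (F x0)) (hFK : ∀ x0, ∫ xn, F x0 xn = q0 x0 * K)
    (hIF : ∀ xn, ∫ x0, joint0n d β q0 n x0 xn * ∑ i, (x0 i - condMean0 d β q0 n xn i) ^ 2
      ≤ ∫ x0, F x0 xn) :
    EtrCov d β q0 n ≤ K := by
  have hFx : Integrable fun x0 => ∫ xn, F x0 xn := by
    simpa only [hFK] using hq0_int.mul_const K
  calc EtrCov d β q0 n ≤ ∫ x0, ∫ xn, F x0 xn :=
        integral_le_integral_integral_swap
          (fun xn => integral_nonneg fun x0 => joint0n_mul_sum_sq_sub_nonneg hq0_nonneg hB x0 xn _)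
          hIF hF hFm.aestronglyMeasurable hFint hFx
    _ = K := by simp only [hFK, integral_mul_const, hq0_one, one_mul]

lemma joint0n_mul_sum_sq_sub_div_sqrt (hA : 0 < alphaBar β n) (x0 xn : Fin d → ℝ) :
    joint0n d β q0 n x0 xn * ∑ i, (x0 i - xn i / Real.sqrt (alphaBar β n)) ^ 2
      = q0 x0 / alphaBar β n *
        (gaussIso d (fun i => Real.sqrt (alphaBar β n) * x0 i) (betaBar β n) xn
          * ∑ i, (xn i - Real.sqrt (alphaBar β n) * x0 i) ^ 2) := by
  have hterm (i : Fin d) : (x0 i - xn i / Real.sqrt (alphaBar β n)) ^ 2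
      = (xn i - Real.sqrt (alphaBar β n) * x0 i) ^ 2 / alphaBar β n := by
    have hsqrt : 0 < Real.sqrt (alphaBar β n) := Real.sqrt_pos.mpr hA
    have hsq : Real.sqrt (alphaBar β n) ^ 2 = alphaBar β n := Real.sq_sqrt hA.le
    set s := Real.sqrt (alphaBar β n)
    rw [← hsq]
    field_simp
    ring
  simp only [joint0n, hterm, ← Finset.sum_div]
  ring

lemma EtrCov_le_mul_betaBar_div_alphaBar (hq0_nonneg : ∀ v, 0 ≤ q0 v) (hq0_meas : Measurable q0)
    (hq0_int : Integrable q0) (hq0_one : ∫ v, q0 v = 1)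
    (hq0_mom2 : Integrable (fun v => q0 v * ∑ i, (v i) ^ 2))
    (hA : 0 < alphaBar β n) (hB : 0 < betaBar β n) :
    EtrCov d β q0 n ≤ d * (betaBar β n / alphaBar β n) := by
  refine EtrCov_le_of_le_integral hq0_nonneg hq0_int hq0_one hB.le
    (F := fun x0 xn => joint0n d β q0 n x0 xn * ∑ i, (x0 i - xn i / Real.sqrt (alphaBar β n)) ^ 2)
    (fun x0 xn => joint0n_mul_sum_sq_sub_nonneg hq0_nonneg hB.le x0 xn _)
    ((measurable_joint0n hq0_meas).mul (by fun_prop)) (fun x0 => ?_) (fun x0 => ?_)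
    (fun xn => integral_joint0n_mul_sum_sq_sub_condMean0_le hq0_nonneg hq0_meas hq0_int hq0_mom2
      hB.le xn _)
  · simp_rw [joint0n_mul_sum_sq_sub_div_sqrt hA]
    exact (integrable_gaussIso_mul_sum_sq_sub hB _).const_mul _
  · simp_rw [joint0n_mul_sum_sq_sub_div_sqrt hA]
    rw [integral_const_mul, integral_gaussIso_mul_sum_sq_sub hB]
    ring

lemma sum_sq_sub_midpoint_le {ι : Type*} [Fintype ι] {a b : ℝ} {v : ι → ℝ}
    (hv : ∀ i, v i ∈ Set.Icc a b) :
    ∑ i, (v i - (a + b) / 2) ^ 2 ≤ Fintype.card ι * ((b - a) / 2) ^ 2 := by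
  have hle (i : ι) : (v i - (a + b) / 2) ^ 2 ≤ ((b - a) / 2) ^ 2 := by
    nlinarith [(hv i).1, (hv i).2]
  simpa using Finset.sum_le_card_nsmul Finset.univ _ _ fun i _ => hle i

lemma EtrCov_le_of_forall_mem_Icc (hq0_nonneg : ∀ v, 0 ≤ q0 v) (hq0_meas : Measurable q0)
    (hq0_int : Integrable q0) (hq0_one : ∫ v, q0 v = 1)
    (hq0_mom2 : Integrable (fun v => q0 v * ∑ i, (v i) ^ 2)) (hB : 0 < betaBar β n)
    {a b : ℝ} (hsupp : ∀ v, q0 v ≠ 0 → ∀ i, v i ∈ Set.Icc a b) :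
    EtrCov d β q0 n ≤ d * ((b - a) / 2) ^ 2 := by
  set K : ℝ := d * ((b - a) / 2) ^ 2
  have hJK (xn : Fin d → ℝ) : Integrable fun x0 => joint0n d β q0 n x0 xn * K :=
    integrable_joint0n_mul hB.le (hq0_int.mul_const K) xn
  refine EtrCov_le_of_le_integral hq0_nonneg hq0_int hq0_one hB.le
    (F := fun x0 xn => joint0n d β q0 n x0 xn * K)
    (fun x0 xn => mul_nonneg (joint0n_nonneg hq0_nonneg hB.le x0 xn) (by positivity))
    ((measurable_joint0n hq0_meas).mul_const K)
    (fun x0 => ((integrable_gaussIso hB _).const_mul (q0 x0)).mul_const K)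
    (fun x0 => by simp only [joint0n, integral_mul_const, integral_const_mul, integral_gaussIso hB,
      mul_one])
    (fun xn => (integral_joint0n_mul_sum_sq_sub_condMean0_le hq0_nonneg hq0_meas hq0_int hq0_mom2
      hB.le xn fun _ => (a + b) / 2).trans
        (integral_mono_of_nonneg (ae_of_all _ fun x0 => ?_) (hJK xn) (ae_of_all _ fun x0 => ?_)))
  · exact joint0n_mul_sum_sq_sub_nonneg hq0_nonneg hB.le x0 xn _
  · by_cases hx0 : q0 x0 = 0
    · simp [joint0n, hx0]
    · refine mul_le_mul_of_nonneg_left ?_ (joint0n_nonneg hq0_nonneg hB.le x0 xn)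
      simpa using sum_sq_sub_midpoint_le (hsupp x0 hx0)

end EtrCov

section Schedule

variable {β : ℕ → ℝ} {n : ℕ}

lemma alphaBar_succ (β : ℕ → ℝ) (n : ℕ) : alphaBar β (n + 1) = alphaBar β n * (1 - β (n + 1)) :=
  Finset.prod_Icc_succ_top (by omega) _

lemma alphaBar_pos (hβ : ∀ i ∈ Finset.Icc 1 n, β i < 1) : 0 < alphaBar β n :=
  Finset.prod_pos fun i hi => sub_pos.mpr (hβ i hi)

lemma alphaBar_le_one (hβ : ∀ i ∈ Finset.Icc 1 n, β i ∈ Set.Icc (0 : ℝ) 1) : alphaBar β n ≤ 1 :=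
  Finset.prod_le_one (fun i hi => sub_nonneg.mpr (hβ i hi).2) fun i hi => by linarith [(hβ i hi).1]

lemma betaBar_succ_pos (hβ : ∀ i ∈ Finset.Icc 1 (n + 1), β i ∈ Set.Ioo (0 : ℝ) 1) :
    0 < betaBar β (n + 1) := by
  have hle : alphaBar β n ≤ 1 := alphaBar_le_one fun i hi =>
    Set.Ioo_subset_Icc_self (hβ i (Finset.Icc_subset_Icc_right n.le_succ hi))
  have hpos : 0 < alphaBar β n := alphaBar_pos fun i hi =>
    (hβ i (Finset.Icc_subset_Icc_right n.le_succ hi)).2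
  have hβn := hβ (n + 1) (by simp)
  rw [betaBar, alphaBar_succ]
  nlinarith [hβn.1, hβn.2]

lemma betaTilde_add_eq_div (hβ : β (n + 1) ≠ 1) (hA : alphaBar β n ≠ 0)
    (hB : betaBar β (n + 1) ≠ 0) :
    betaTilde β (n + 1) + alphaBar β n * β (n + 1) ^ 2 / betaBar β (n + 1) ^ 2
      * (betaBar β (n + 1) / alphaBar β (n + 1)) = β (n + 1) / (1 - β (n + 1)) := by
  have h1 : 1 - β (n + 1) ≠ 0 := sub_ne_zero.mpr hβ.symm
  have hrec : betaBar β (n + 1) = (1 - β (n + 1)) * betaBar β n + β (n + 1) := by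
    simp only [betaBar, alphaBar_succ]; ring
  rw [betaTilde, Nat.add_sub_cancel, alphaBar_succ]
  field_simp
  rw [hrec]
  ring

end Schedule

section SigmaStar

variable {d : ℕ} {β : ℕ → ℝ} {q0 : (Fin d → ℝ) → ℝ} {n : ℕ}

lemma betaTilde_le_sigmaStarDDPM2 (hA : 0 ≤ alphaBar β (n - 1)) (hE : 0 ≤ EtrCov d β q0 n) :
    betaTilde β n ≤ sigmaStarDDPM2 d β q0 n :=
  le_add_of_nonneg_right (by positivity)

lemma sigmaStarDDPM2_le (hA : 0 ≤ alphaBar β (n - 1)) {c : ℝ} (hc : 0 ≤ c)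
    (hE : EtrCov d β q0 n ≤ d * c) :
    sigmaStarDDPM2 d β q0 n
      ≤ betaTilde β n + alphaBar β (n - 1) * β n ^ 2 / betaBar β n ^ 2 * c := by
  unfold sigmaStarDDPM2
  gcongr
  exact div_le_of_le_mul₀ d.cast_nonneg hc (by rwa [mul_comm] at hE)

end SigmaStar

theorem stmt_18_general {d N : ℕ} (β : ℕ → ℝ)
    (hβ : ∀ n ∈ Finset.Icc 1 N, β n ∈ Set.Ioo (0 : ℝ) 1)
    (q0 : (Fin d → ℝ) → ℝ)
    (hq0_nonneg : ∀ v, 0 ≤ q0 v) (hq0_meas : Measurable q0) (hq0_one : ∫ v, q0 v = 1)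
    (hq0_mom2 : Integrable (fun v => q0 v * ∑ i, (v i) ^ 2)) :
    ∀ n ∈ Finset.Icc 1 N,
      (betaTilde β n ≤ sigmaStarDDPM2 d β q0 n) ∧
      (sigmaStarDDPM2 d β q0 n ≤ β n / (1 - β n)) ∧
      (∀ a b : ℝ, (∀ v, q0 v ≠ 0 → ∀ i, v i ∈ Set.Icc a b) →
        sigmaStarDDPM2 d β q0 n ≤ betaTilde β n +
          alphaBar β (n - 1) * β n ^ 2 / betaBar β n ^ 2 * ((b - a) / 2) ^ 2) := by
  intro n hn
  obtain ⟨m, rfl⟩ : ∃ m, n = m + 1 := ⟨n - 1, by have := (Finset.mem_Icc.mp hn).1; omega⟩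
  have hβm : ∀ i ∈ Finset.Icc 1 (m + 1), β i ∈ Set.Ioo (0 : ℝ) 1 := fun i hi =>
    hβ i (Finset.Icc_subset_Icc_right (Finset.mem_Icc.mp hn).2 hi)
  have hq0_int : Integrable q0 := .of_integral_ne_zero (by simp [hq0_one])
  have hA : 0 < alphaBar β m := alphaBar_pos fun i hi =>
    (hβm i (Finset.Icc_subset_Icc_right m.le_succ hi)).2
  have hA' : 0 < alphaBar β (m + 1) := alphaBar_pos fun i hi => (hβm i hi).2
  have hB : 0 < betaBar β (m + 1) := betaBar_succ_pos hβm
  refine ⟨betaTilde_le_sigmaStarDDPM2 hA.le (EtrCov_nonneg hq0_nonneg hB.le), ?_,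
    fun a b hsupp => sigmaStarDDPM2_le hA.le (by positivity)
      (EtrCov_le_of_forall_mem_Icc hq0_nonneg hq0_meas hq0_int hq0_one hq0_mom2 hB hsupp)⟩
  calc sigmaStarDDPM2 d β q0 (m + 1)
      ≤ _ := sigmaStarDDPM2_le hA.le (by positivity)
        (EtrCov_le_mul_betaBar_div_alphaBar hq0_nonneg hq0_meas hq0_int hq0_one hq0_mom2 hA' hB)
    _ = β (m + 1) / (1 - β (m + 1)) :=
        betaTilde_add_eq_div (hβm (m + 1) (by simp)).2.ne hA.ne' hB.ne'

/-- simplified bounds of the optimal reverse variance for DDPM: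
`β̃ₙ ≤ σₙ*² ≤ βₙ/αₙ`, and if the data distribution is supported in `[a,b]^d` then also
`σₙ*² ≤ β̃ₙ + (ᾱ_{n−1} βₙ²/β̄ₙ²) ((b−a)/2)²`. -/
theorem stmt_18 {d N : ℕ} (hd : 0 < d) (hN : 1 ≤ N) (β : ℕ → ℝ)
    (hβ : ∀ n ∈ Finset.Icc 1 N, β n ∈ Set.Ioo (0 : ℝ) 1)
    (q0 : (Fin d → ℝ) → ℝ)
    (hq0_nonneg : ∀ v, 0 ≤ q0 v) (hq0_meas : Measurable q0) (hq0_one : ∫ v, q0 v = 1)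
    (hq0_mom2 : Integrable (fun v => q0 v * ∑ i, (v i) ^ 2)) :
    ∀ n ∈ Finset.Icc 1 N,
      (betaTilde β n ≤ sigmaStarDDPM2 d β q0 n) ∧
      (sigmaStarDDPM2 d β q0 n ≤ β n / (1 - β n)) ∧
      (∀ a b : ℝ, (∀ v, q0 v ≠ 0 → ∀ i, v i ∈ Set.Icc a b) →
        sigmaStarDDPM2 d β q0 n ≤ betaTilde β n +
          alphaBar β (n - 1) * β n ^ 2 / betaBar β n ^ 2 * ((b - a) / 2) ^ 2) :=
  stmt_18_general β hβ q0 hq0_nonneg hq0_meas hq0_one hq0_mom2
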